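/- Let λ = (q-1)n - qh be an eigenvalue of the Hamming graph H(n,q) with number h, let f : F_q^n → ℂ be a λ-eigenfunction (i.e., ∑_{β: ρ(α,β)=1} f(β) = λ f(α) for all α), let α ∈ F_q^n, and let I ⊆ {1,...,n} with complement Ī. Then the local weight enumerators of f in the orthogonal faces Γ_I(α) and Γ_Ī(α) satisfy (x + (q-1)y)^{h - |Ī|} · g^{Ī,α}_f(x,y) = (x' + (q-1)y')^{h - |I|} · g^{I,α}_f(x',y'), where x' = x + (q-2)y and y' = -y. -/

import Mathlib

open Finset Matrix

noncomputable def xiq (q : ℕ) : ℂ := Complex.exp (2 * Real.pi * Complex.I / q)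

/-- The character `φ^β(α) = ξ^{⟨α,β⟩}` on the q-ary Hamming space. -/
noncomputable def chr (q n : ℕ) [NeZero q] (β α : Fin n → ZMod q) : ℂ :=
  xiq q ^ (∑ i, α i * β i : ZMod q).val

/-- Fourier transform `f̂(α) = ∑_β f(β) conj(ξ^{⟨α,β⟩})`. -/
noncomputable def ftr (q n : ℕ) [NeZero q] (f : (Fin n → ZMod q) → ℂ)
    (α : Fin n → ZMod q) : ℂ :=
  ∑ β : Fin n → ZMod q, f β * (starRingEnd ℂ) (chr q n β α)

/-- The face `Γ_I(α)` of the hypercube. -/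
def face (q n : ℕ) [NeZero q] (I : Finset (Fin n)) (α : Fin n → ZMod q) :
    Finset (Fin n → ZMod q) :=
  Finset.univ.filter (fun β => ∀ i ∉ I, β i = α i)

/-- The support `s(β)` of a vertex. -/
def supp (q n : ℕ) [NeZero q] (β : Fin n → ZMod q) : Finset (Fin n) :=
  Finset.univ.filter (fun i => β i ≠ 0)

/-- Local weight enumerator `g^{I,α}_f(x,y)`. -/
noncomputable def lwe (q n : ℕ) [NeZero q] (f : (Fin n → ZMod q) → ℂ)
    (I : Finset (Fin n)) (α : Fin n → ZMod q) (x y : ℂ) : ℂ :=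
  ∑ β ∈ face q n I α, f β * y ^ hammingDist β α * x ^ (I.card - hammingDist β α)

/-- `f` is an eigenfunction of the Hamming graph `H(n,q)` with eigenvalue `μ`. -/
def IsEigenfun (q n : ℕ) [NeZero q] (f : (Fin n → ZMod q) → ℂ) (μ : ℂ) : Prop :=
  ∀ α, ∑ β ∈ Finset.univ.filter (fun β => hammingDist α β = 1), f β = μ * f α

/-- Adjacency matrix of the Hamming graph `H(n,q)`. -/
noncomputable def adjM (q n : ℕ) [NeZero q] :
    Matrix (Fin n → ZMod q) (Fin n → ZMod q) ℂ :=
  fun α β => if hammingDist α β = 1 then 1 else 0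

/-- Vertex-color incidence matrix of a coloring `c`. -/
noncomputable def colM (q n r : ℕ) [NeZero q] (c : (Fin n → ZMod q) → Fin r) :
    Matrix (Fin n → ZMod q) (Fin r) ℂ :=
  fun α i => if c α = i then 1 else 0

/-!
Expand `f` in the characters `χ_γ(β) = ξ^⟨β,γ⟩`. Each `χ_γ` is an eigenvector of the symmetric
adjacency matrix with eigenvalue `(q-1)n - q·wt(γ)`, so a `λ`-eigenfunction involves only characters
of weight `h`. The face `Γ_I(α)` is a product set, so the local weight enumerator of `χ_γ` factors
over the coordinates as `χ_γ(α) ∏_{j ∈ I} c_j`, with `c_j = x + (q-1)y` if `γ_j = 0` and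
`c_j = x - y` otherwise; the substitution `(x, y) ↦ (x', y')` swaps these two values. For
`wt(γ) = h` the identity is then a count of exponents.
-/

lemma Matrix.IsSymm.dotProduct_eq_zero_of_mulVec_eq_smul {m R : Type*} [Fintype m] [CommRing R]
    [NoZeroDivisors R] {A : Matrix m m R} (hA : A.IsSymm) {v w : m → R} {μ ν : R}
    (hv : A *ᵥ v = μ • v) (hw : A *ᵥ w = ν • w) (hμν : μ ≠ ν) : v ⬝ᵥ w = 0 := by
  have h : μ * (v ⬝ᵥ w) = ν * (v ⬝ᵥ w) :=
    calc μ * (v ⬝ᵥ w) = w ⬝ᵥ (A *ᵥ v) := by rw [hv, dotProduct_smul, dotProduct_comm, smul_eq_mul]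
      _ = (Aᵀ *ᵥ w) ⬝ᵥ v := by rw [dotProduct_mulVec, mulVec_transpose]
      _ = ν * (v ⬝ᵥ w) := by rw [hA.eq, hw, smul_dotProduct, dotProduct_comm, smul_eq_mul]
  have h0 : (μ - ν) * (v ⬝ᵥ w) = 0 := by rw [sub_mul, h, sub_self]
  exact (mul_eq_zero.1 h0).resolve_left (sub_ne_zero.2 hμν)

lemma pow_mul_pow_mul_prod_compl_ite {ι M : Type*} [Fintype ι] [DecidableEq ι] [CommMonoid M]
    (p : ι → Prop) [DecidablePred p] (I : Finset ι) (A B : M) :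
    A ^ #{j | ¬p j} * B ^ #I * ∏ j ∈ Iᶜ, (if p j then A else B)
      = B ^ #{j | ¬p j} * A ^ #Iᶜ * ∏ j ∈ I, (if p j then B else A) := by
  have hsplit : ∀ X : M,
      X ^ #{j | ¬p j} = (∏ j ∈ I, if p j then 1 else X) * ∏ j ∈ Iᶜ, if p j then 1 else X :=
    fun X => by rw [prod_mul_prod_compl, prod_ite, prod_const_one, one_mul, prod_const]
  calc A ^ #{j | ¬p j} * B ^ #I * ∏ j ∈ Iᶜ, (if p j then A else B)
      = (∏ j ∈ I, (if p j then 1 else A) * B)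
          * ∏ j ∈ Iᶜ, (if p j then 1 else A) * (if p j then A else B) := by
        rw [prod_mul_distrib, prod_mul_distrib, prod_const, hsplit]; ac_rfl
    _ = (∏ j ∈ I, (if p j then 1 else B) * (if p j then B else A))
          * ∏ j ∈ Iᶜ, (if p j then 1 else B) * A := by
        congr 1 <;> exact prod_congr rfl fun j _ => by split_ifs <;> simp [mul_comm]
    _ = B ^ #{j | ¬p j} * A ^ #Iᶜ * ∏ j ∈ I, (if p j then B else A) := by
        rw [prod_mul_distrib, prod_mul_distrib, prod_const, hsplit]; ac_rfl

lemma AddChar.map_sum_eq_prod {ι A M : Type*} [AddCommMonoid A] [CommMonoid M]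
    (ψ : AddChar A M) (s : Finset ι) (g : ι → A) :
    ψ (∑ i ∈ s, g i) = ∏ i ∈ s, ψ (g i) :=
  map_prod ψ.toMonoidHom (fun i => Multiplicative.ofAdd (g i)) s

section HammingNeighbours

variable {ι : Type*} [Fintype ι] [DecidableEq ι] {κ : ι → Type*} [∀ i, DecidableEq (κ i)]

lemma hammingDist_update_self {α : ∀ i, κ i} {i : ι} {t : κ i} (ht : t ≠ α i) :
    hammingDist α (Function.update α i t) = 1 := by
  rw [hammingDist, card_eq_one]
  refine ⟨i, ?_⟩
  ext j
  by_cases hj : j = i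
  · subst hj; simpa using ht.symm
  · simp [hj]

lemma eq_update_of_hammingDist_eq_one {α β : ∀ i, κ i} (h : hammingDist α β = 1) :
    ∃ i, β i ≠ α i ∧ β = Function.update α i (β i) := by
  obtain ⟨i, hi⟩ := card_eq_one.1 h
  have hdiff : ∀ j, α j ≠ β j ↔ j = i := fun j => by
    simpa using congrArg (j ∈ ·) hi
  refine ⟨i, fun he => (hdiff i).2 rfl he.symm, funext fun j => ?_⟩
  by_cases hj : j = i
  · subst hj; simp
  · rw [Function.update_of_ne hj]
    exact (not_not.1 (mt (hdiff j).1 hj)).symm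

lemma sum_hammingDist_eq_one [∀ i, Fintype (κ i)] {M : Type*} [AddCommMonoid M] (α : ∀ i, κ i)
    (F : (∀ i, κ i) → M) :
    ∑ β ∈ univ.filter (fun β => hammingDist α β = 1), F β
      = ∑ i, ∑ t ∈ univ.erase (α i), F (Function.update α i t) := by
  rw [sum_sigma']
  symm
  refine sum_bij (fun p _ => Function.update α p.1 p.2) ?_ ?_ ?_ fun _ _ => rfl
  · rintro ⟨i, t⟩ hp
    simp only [mem_sigma, mem_erase] at hp
    simpa using hammingDist_update_self hp.2.1
  · rintro ⟨i, t⟩ hp ⟨i', t'⟩ hp' heq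
    simp only [mem_sigma, mem_erase] at hp hp'
    have hi : i = i' := by
      by_contra hii
      have := congrFun heq i
      rw [Function.update_self, Function.update_of_ne hii] at this
      exact hp.2.1 this
    subst hi
    simpa using congrFun heq i
  · intro β hβ
    obtain ⟨i, hne, hβ⟩ := eq_update_of_hammingDist_eq_one (mem_filter.1 hβ).2
    exact ⟨⟨i, β i⟩, by simpa using hne, hβ.symm⟩

end HammingNeighbours

section HammingSpace

variable {q n : ℕ} [NeZero q]

local notation "ψ" => (ZMod.stdAddChar : AddChar (ZMod q) ℂ)

lemma chr_eq_stdAddChar (β α : Fin n → ZMod q) :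
    chr q n β α = ψ (∑ i, α i * β i) := by
  rw [chr, ZMod.stdAddChar_apply, ZMod.toCircle_apply, xiq, ← Complex.exp_nat_mul]
  congr 1
  ring

lemma chr_eq_prod (β α : Fin n → ZMod q) : chr q n β α = ∏ i, ψ (α i * β i) := by
  rw [chr_eq_stdAddChar, AddChar.map_sum_eq_prod]

lemma sum_chr (δ : Fin n → ZMod q) :
    ∑ γ, chr q n γ δ = if δ = 0 then (q : ℂ) ^ n else 0 := by
  simp_rw [chr_eq_prod, mul_comm (δ _)]
  rw [← Fintype.prod_sum (fun i t => ψ (t * δ i))]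
  simp_rw [AddChar.sum_mulShift _ (ZMod.isPrimitive_stdAddChar q)]
  simp [Finset.prod_ite_zero, funext_iff]

lemma starRingEnd_chr_mul_chr (β β' γ : Fin n → ZMod q) :
    starRingEnd ℂ (chr q n β' γ) * chr q n γ β = chr q n γ (β - β') := by
  simp only [chr_eq_stdAddChar, ← AddChar.map_neg_eq_conj, ← AddChar.map_add_eq_mul,
    Pi.sub_apply, sub_mul, sum_sub_distrib, mul_comm (β' _)]
  ring_nf

lemma sum_ftr_mul_chr (f : (Fin n → ZMod q) → ℂ) (β : Fin n → ZMod q) :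
    ∑ γ, ftr q n f γ * chr q n γ β = (q : ℂ) ^ n * f β := by
  simp_rw [ftr, sum_mul, mul_assoc, starRingEnd_chr_mul_chr]
  rw [sum_comm]
  simp_rw [← mul_sum, sum_chr, sub_eq_zero, mul_ite, mul_zero, sum_ite_eq, if_pos (mem_univ _),
    mul_comm]

lemma chr_update (γ α : Fin n → ZMod q) (i : Fin n) (t : ZMod q) :
    chr q n γ (Function.update α i t) = chr q n γ α * ψ ((t - α i) * γ i) := by
  rw [chr_eq_stdAddChar, chr_eq_stdAddChar, ← AddChar.map_add_eq_mul]
  congr 1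
  rw [← add_sum_erase _ _ (mem_univ i), ← add_sum_erase _ _ (mem_univ i), Function.update_self,
    sum_congr rfl fun j hj => by rw [Function.update_of_ne (ne_of_mem_erase hj)]]
  ring

lemma sum_chr_hammingDist_eq_one (γ α : Fin n → ZMod q) :
    ∑ β ∈ univ.filter (fun β => hammingDist α β = 1), chr q n γ β
      = (((q : ℂ) - 1) * n - q * hammingNorm γ) * chr q n γ α := by
  have hcoord : ∀ i, ∑ t ∈ univ.erase (α i), ψ ((t - α i) * γ i)
      = (if γ i = 0 then (q : ℂ) else 0) - 1 := fun i => by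
    rw [sum_erase_eq_sub (mem_univ _), sub_self, zero_mul, AddChar.map_zero_eq_one,
      Fintype.sum_equiv (Equiv.subRight (α i)) (fun t => ψ ((t - α i) * γ i))
        (fun t => ψ (t * γ i)) fun _ => rfl,
      AddChar.sum_mulShift _ (ZMod.isPrimitive_stdAddChar q), ZMod.card]
    push_cast
    rfl
  have hzeros : (#{i | γ i = 0} : ℂ) = n - hammingNorm γ := by
    rw [eq_sub_iff_add_eq, hammingNorm, ← Nat.cast_add, card_filter_add_card_filter_not,
      card_univ, Fintype.card_fin]
  simp_rw [sum_hammingDist_eq_one, chr_update, ← mul_sum, hcoord, sum_sub_distrib, sum_ite,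
    sum_const_zero, sum_const, card_univ, Fintype.card_fin, nsmul_eq_mul, hzeros]
  ring

lemma adjM_isSymm : (adjM q n).IsSymm :=
  Matrix.IsSymm.ext fun α β => by simp only [adjM, hammingDist_comm]

lemma adjM_mulVec (g : (Fin n → ZMod q) → ℂ) (α : Fin n → ZMod q) :
    (adjM q n *ᵥ g) α = ∑ β ∈ univ.filter (fun β => hammingDist α β = 1), g β := by
  simp only [mulVec, dotProduct, adjM, ite_mul, one_mul, zero_mul, sum_filter]

lemma isEigenfun_iff_mulVec (f : (Fin n → ZMod q) → ℂ) (μ : ℂ) :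
    IsEigenfun q n f μ ↔ adjM q n *ᵥ f = μ • f := by
  simp only [IsEigenfun, funext_iff, adjM_mulVec, Pi.smul_apply, smul_eq_mul]

lemma chr_comm (β γ : Fin n → ZMod q) : chr q n β γ = chr q n γ β := by
  simp only [chr, mul_comm]

lemma adjM_mulVec_conj_chr (γ : Fin n → ZMod q) :
    adjM q n *ᵥ (fun β => starRingEnd ℂ (chr q n γ β))
      = (((q : ℂ) - 1) * n - q * hammingNorm γ) • fun β => starRingEnd ℂ (chr q n γ β) := by
  ext α
  rw [adjM_mulVec, ← map_sum, sum_chr_hammingDist_eq_one, Pi.smul_apply, smul_eq_mul, map_mul]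
  simp

lemma IsEigenfun.ftr_eq_zero {f : (Fin n → ZMod q) → ℂ} {μ : ℂ} (hf : IsEigenfun q n f μ)
    {γ : Fin n → ZMod q} (hγ : μ ≠ ((q : ℂ) - 1) * n - q * hammingNorm γ) : ftr q n f γ = 0 := by
  rw [ftr]
  simp_rw [chr_comm _ γ]
  exact adjM_isSymm.dotProduct_eq_zero_of_mulVec_eq_smul ((isEigenfun_iff_mulVec f μ).1 hf)
    (adjM_mulVec_conj_chr γ) hγ

lemma face_eq_piFinset (I : Finset (Fin n)) (α : Fin n → ZMod q) :
    face q n I α = Fintype.piFinset fun j => if j ∈ I then univ else {α j} := by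
  ext β
  simp only [face, mem_filter, mem_univ, true_and, Fintype.mem_piFinset]
  refine ⟨fun h j => ?_, fun h j hj => by simpa [hj] using h j⟩
  by_cases hj : j ∈ I
  · simp [hj]
  · simp [hj, h j hj]

lemma pow_hammingDist_mul_pow_eq_prod {I : Finset (Fin n)} {α β : Fin n → ZMod q}
    (hβ : β ∈ face q n I α) (x y : ℂ) :
    y ^ hammingDist β α * x ^ (#I - hammingDist β α) = ∏ j ∈ I, if β j = α j then x else y := by
  have hd : hammingDist β α = #{j ∈ I | β j ≠ α j} := by
    rw [hammingDist]
    congr 1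
    ext j
    simp only [face, mem_filter, mem_univ, true_and] at hβ ⊢
    exact ⟨fun hne => ⟨by_contra fun hj => hne (hβ j hj), hne⟩, And.right⟩
  have hsplit := card_filter_add_card_filter_not (s := I) (fun j => β j = α j)
  rw [prod_ite, prod_const, prod_const, hd, ← hsplit, Nat.add_sub_cancel, mul_comm]

lemma sum_stdAddChar_mul_mul_ite (a c : ZMod q) (x y : ℂ) :
    ∑ b, ψ (b * c) * (if b = a then x else y)
      = ψ (a * c) * if c = 0 then x + ((q : ℂ) - 1) * y else x - y := by
  have hsplit : ∀ b, ψ (b * c) * (if b = a then x else y)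
      = ψ (b * c) * y + if b = a then ψ (a * c) * (x - y) else 0 := fun b => by
    split_ifs with hb
    · subst hb; ring
    · ring
  rw [sum_congr rfl fun b _ => hsplit b, sum_add_distrib, ← sum_mul,
    AddChar.sum_mulShift _ (ZMod.isPrimitive_stdAddChar q), sum_ite_eq', if_pos (mem_univ _),
    ZMod.card]
  split_ifs with hc
  · simp only [hc, mul_zero, AddChar.map_zero_eq_one]
    ring
  · ring

lemma lwe_chr (γ : Fin n → ZMod q) (I : Finset (Fin n)) (α : Fin n → ZMod q) (x y : ℂ) :
    lwe q n (chr q n γ) I α x y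
      = chr q n γ α * ∏ j ∈ I, if γ j = 0 then x + ((q : ℂ) - 1) * y else x - y := by
  have hterm : ∀ β ∈ face q n I α,
      chr q n γ β * y ^ hammingDist β α * x ^ (#I - hammingDist β α)
        = ∏ j, ψ (β j * γ j) * if j ∈ I then (if β j = α j then x else y) else 1 := by
    intro β hβ
    rw [mul_assoc, pow_hammingDist_mul_pow_eq_prod hβ, chr_eq_prod, prod_mul_distrib,
      prod_ite_mem, univ_inter]
  have hcoord : ∀ j, ∑ b ∈ (if j ∈ I then univ else {α j}),
      ψ (b * γ j) * (if j ∈ I then (if b = α j then x else y) else 1)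
        = ψ (α j * γ j) * if j ∈ I then
            (if γ j = 0 then x + ((q : ℂ) - 1) * y else x - y) else 1 := by
    intro j
    by_cases hj : j ∈ I
    · simpa only [hj, if_true] using sum_stdAddChar_mul_mul_ite (α j) (γ j) x y
    · simp [hj]
  rw [lwe, sum_congr rfl hterm, face_eq_piFinset, ← prod_univ_sum _
      fun j b => ψ (b * γ j) * if j ∈ I then (if b = α j then x else y) else 1,
    prod_congr rfl fun j _ => hcoord j, prod_mul_distrib, ← chr_eq_prod, prod_ite_mem, univ_inter]

lemma pow_mul_lwe_eq_sum_ftr_mul_lwe_chr (f : (Fin n → ZMod q) → ℂ) (I : Finset (Fin n))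
    (α : Fin n → ZMod q) (x y : ℂ) :
    (q : ℂ) ^ n * lwe q n f I α x y = ∑ γ, ftr q n f γ * lwe q n (chr q n γ) I α x y := by
  simp only [lwe, mul_sum]
  rw [sum_comm]
  refine sum_congr rfl fun β _ => ?_
  rw [← mul_assoc, ← mul_assoc, ← sum_ftr_mul_chr, sum_mul, sum_mul]
  simp only [mul_assoc]

end HammingSpace

-- The paper's identity multiplied through by `(x+(q-1)y)^|Ī| (x'+(q-1)y')^|I|`.
theorem stmt_7_general (q n : ℕ) [NeZero q] (h : ℕ)
    (f : (Fin n → ZMod q) → ℂ)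
    (hf : IsEigenfun q n f (((q : ℂ) - 1) * n - (q : ℂ) * h))
    (α : Fin n → ZMod q) (I : Finset (Fin n)) (x y : ℂ) :
    (x + ((q : ℂ) - 1) * y) ^ h *
      ((x + ((q : ℂ) - 2) * y) + ((q : ℂ) - 1) * (-y)) ^ I.card *
      lwe q n f Iᶜ α x y
    = ((x + ((q : ℂ) - 2) * y) + ((q : ℂ) - 1) * (-y)) ^ h *
        (x + ((q : ℂ) - 1) * y) ^ Iᶜ.card *
        lwe q n f I α (x + ((q : ℂ) - 2) * y) (-y) := by
  have hq : (q : ℂ) ≠ 0 := Nat.cast_ne_zero.2 (NeZero.ne q)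
  have hB : (x + ((q : ℂ) - 2) * y) + ((q : ℂ) - 1) * (-y) = x - y := by ring
  have hA : (x + ((q : ℂ) - 2) * y) - (-y) = x + ((q : ℂ) - 1) * y := by ring
  apply mul_left_cancel₀ (pow_ne_zero n hq)
  rw [mul_left_comm, pow_mul_lwe_eq_sum_ftr_mul_lwe_chr, mul_left_comm,
    pow_mul_lwe_eq_sum_ftr_mul_lwe_chr, mul_sum, mul_sum]
  refine sum_congr rfl fun γ _ => ?_
  by_cases hγ : hammingNorm γ = h
  · rw [lwe_chr, lwe_chr, hB, hA, ← hγ, hammingNorm]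
    linear_combination ftr q n f γ * chr q n γ α *
      pow_mul_pow_mul_prod_compl_ite (fun j => γ j = 0) I (x + ((q : ℂ) - 1) * y) (x - y)
  · have hμ : ((q : ℂ) - 1) * n - q * h ≠ ((q : ℂ) - 1) * n - q * hammingNorm γ := by
      rw [Ne, sub_right_inj, mul_right_inj' hq, Nat.cast_inj]
      exact Ne.symm hγ
    simp [hf.ftr_eq_zero hμ]

/-- Theorem 1, with the negative exponents cleared:
`(x+(q-1)y)^{h-|Ī|} g^{Ī,α}_f(x,y) = (x'+(q-1)y')^{h-|I|} g^{I,α}_f(x',y')`,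
where `x' = x+(q-2)y`, `y' = -y`, multiplied through by
`(x+(q-1)y)^{|Ī|} (x'+(q-1)y')^{|I|}`. -/
theorem stmt_7 (q n : ℕ) [NeZero q] (hq : 2 ≤ q) (h : ℕ) (hh : h ≤ n)
    (f : (Fin n → ZMod q) → ℂ)
    (hf : IsEigenfun q n f (((q : ℂ) - 1) * n - (q : ℂ) * h))
    (α : Fin n → ZMod q) (I : Finset (Fin n)) (x y : ℂ) :
    (x + ((q : ℂ) - 1) * y) ^ h *
      ((x + ((q : ℂ) - 2) * y) + ((q : ℂ) - 1) * (-y)) ^ I.card *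
      lwe q n f Iᶜ α x y
    = ((x + ((q : ℂ) - 2) * y) + ((q : ℂ) - 1) * (-y)) ^ h *
        (x + ((q : ℂ) - 1) * y) ^ Iᶜ.card *
        lwe q n f I α (x + ((q : ℂ) - 2) * y) (-y) :=
  stmt_7_general q n h f hf α I x y
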